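/- arXiv:2301.05469 — 5 statements merged into one kernel-verified Lean document; each statement's English description precedes it below -/
import Mathlib

section
/- Let C_a, C_t, N_a, s (denoting the noise power σ²) be positive real numbers, let J ≥ 1 be a natural number, and let x be a real number with 0 < x < 1. Then the function l ↦ Q_x(l) is strictly increasing on ℝ. In particular, for every integer l with 1 ≤ l ≤ J one has Q_x(l) ≤ Q_x(J), with equality if and only if l = J (Proposition 2: the active IRS should be deployed at the final IRS location for wireless power transfer). -/
open Real

/-- Received power in the multi-IRS WPT system, as a function of the AIRS index `l`:
`Q_x(l) = (C_a·C_t·N_a·x^{2(J−1)} + s·C_a·x^{2(J−l)}) / (C_t·x^{2(l−1)} + s)`. -/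
noncomputable def Qrec (Ca Ct Na s : ℝ) (J : ℕ) (x l : ℝ) : ℝ :=
  (Ca * Ct * Na * x ^ (2 * ((J : ℝ) - 1)) + s * Ca * x ^ (2 * ((J : ℝ) - l))) /
    (Ct * x ^ (2 * (l - 1)) + s)

/-- Proposition 2: for `0 < x < 1`, the received power `Q_x` is strictly increasing in the
AIRS location `l`; in particular, among the integer locations `1 ≤ l ≤ J`, `l = J` is the
unique maximizer. -/
theorem stmt_0 (Ca Ct Na s : ℝ) (hCa : 0 < Ca) (hCt : 0 < Ct) (hNa : 0 < Na) (hs : 0 < s)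
    (J : ℕ) (hJ : 1 ≤ J) (x : ℝ) (hx0 : 0 < x) (hx1 : x < 1) :
    StrictMono (fun l : ℝ => Qrec Ca Ct Na s J x l) ∧
    ∀ l : ℤ, 1 ≤ l → l ≤ (J : ℤ) →
      Qrec Ca Ct Na s J x (l : ℝ) ≤ Qrec Ca Ct Na s J x (J : ℝ) ∧
      (Qrec Ca Ct Na s J x (l : ℝ) = Qrec Ca Ct Na s J x (J : ℝ) ↔ l = (J : ℤ)) := by
  have hmono : StrictMono (fun l : ℝ => Qrec Ca Ct Na s J x l) := by
    intro a b hab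
    simp only [Qrec]
    have h1 : x ^ (2 * ((J : ℝ) - a)) < x ^ (2 * ((J : ℝ) - b)) :=
      rpow_lt_rpow_of_exponent_gt hx0 hx1 (by linarith)
    have h2 : x ^ (2 * (b - 1)) < x ^ (2 * (a - 1)) :=
      rpow_lt_rpow_of_exponent_gt hx0 hx1 (by linarith)
    have hnumpos : 0 < Ca * Ct * Na * x ^ (2 * ((J : ℝ) - 1)) + s * Ca * x ^ (2 * ((J : ℝ) - a)) := by
      have := rpow_pos_of_pos hx0 (2 * ((J : ℝ) - 1))
      have := rpow_pos_of_pos hx0 (2 * ((J : ℝ) - a))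
      positivity
    have hdb : (0:ℝ) < Ct * x ^ (2 * (b - 1)) + s := by
      have := rpow_pos_of_pos hx0 (2 * (b - 1)); positivity
    calc (Ca * Ct * Na * x ^ (2 * ((J : ℝ) - 1)) + s * Ca * x ^ (2 * ((J : ℝ) - a))) /
          (Ct * x ^ (2 * (a - 1)) + s)
        < (Ca * Ct * Na * x ^ (2 * ((J : ℝ) - 1)) + s * Ca * x ^ (2 * ((J : ℝ) - a))) /
          (Ct * x ^ (2 * (b - 1)) + s) := by
          apply div_lt_div_of_pos_left hnumpos hdb
          nlinarith
      _ < (Ca * Ct * Na * x ^ (2 * ((J : ℝ) - 1)) + s * Ca * x ^ (2 * ((J : ℝ) - b))) /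
          (Ct * x ^ (2 * (b - 1)) + s) := by
          apply div_lt_div_of_pos_right _ hdb
          nlinarith [mul_lt_mul_of_pos_left h1 (mul_pos hs hCa)]
  refine ⟨hmono, fun l hl1 hlJ => ?_⟩
  have hle : (l : ℝ) ≤ (J : ℝ) := by exact_mod_cast hlJ
  refine ⟨hmono.monotone hle, ?_, fun h => by rw [h]; norm_num⟩
  intro h
  have : (l : ℝ) = (J : ℝ) := hmono.injective h
  exact_mod_cast this
end

section
/- Let C_a, C_t, N_a, s be positive reals, J a natural number, and l a real number with 1 < l ≤ J. Then the limit as x → ∞ of Q_x(l)/x^{2(J−l)} equals C_a·N_a, i.e., the received power in wireless power transfer scales as x^{2(J−l)} with coefficient C_a·N_a (equation (21)). -/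
open Real Filter

/-- Equation (21): for `1 < l ≤ J`, as `x → ∞` the received power in WPT scales as
`x^{2(J−l)}` with coefficient `C_a·N_a`. -/
theorem stmt_11 (Ca Ct Na s : ℝ) (hCa : 0 < Ca) (hCt : 0 < Ct) (hNa : 0 < Na) (hs : 0 < s)
    (J : ℕ) (l : ℝ) (hl1 : 1 < l) (hlJ : l ≤ (J : ℝ)) :
    Tendsto (fun x : ℝ => Qrec Ca Ct Na s J x l / x ^ (2 * ((J : ℝ) - l))) atTop
      (nhds (Ca * Na)) := by
  have hp : 0 < 2 * (l - 1) := by linarith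
  have hD : Tendsto (fun x : ℝ => Ct * x ^ (2 * (l - 1)) + s) atTop atTop :=
    tendsto_atTop_add_const_right _ s ((tendsto_rpow_atTop hp).const_mul_atTop hCt)
  have h0 : Tendsto (fun x : ℝ => (s * Ca - Ca * Na * s) / (Ct * x ^ (2 * (l - 1)) + s))
      atTop (nhds 0) := tendsto_const_nhds.div_atTop hD
  have h1 : Tendsto
      (fun x : ℝ => Ca * Na + (s * Ca - Ca * Na * s) / (Ct * x ^ (2 * (l - 1)) + s))
      atTop (nhds (Ca * Na)) := by
    simpa using tendsto_const_nhds.add h0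
  refine h1.congr' ?_
  filter_upwards [eventually_gt_atTop 0] with x hx
  have hT : 0 < x ^ (2 * (l - 1)) := rpow_pos_of_pos hx _
  have hDpos : 0 < Ct * x ^ (2 * (l - 1)) + s := by positivity
  have hxp : 0 < x ^ (2 * ((J : ℝ) - l)) := rpow_pos_of_pos hx _
  have hsplit : x ^ (2 * ((J : ℝ) - 1)) = x ^ (2 * (l - 1)) * x ^ (2 * ((J : ℝ) - l)) := by
    rw [← rpow_add hx]; ring_nf
  unfold Qrec
  rw [hsplit]
  field_simp
  ring
end

section
/- Let J ≥ 2 be a natural number and 0 < x < 1, and define R(C_a, C_t) = x^{1−J}·(C_a + C_t)/(C_a·x^{2(1−J)} + C_t) for positive reals C_a, C_t. Then for each fixed C_a > 0 the map C_t ↦ R(C_a, C_t) is strictly increasing on (0, ∞), and for each fixed C_t > 0 the map C_a ↦ R(C_a, C_t) is strictly decreasing on (0, ∞) (monotonicity of the high-transmit-power SNR gain of the optimal active-IRS deployment over middle deployment). -/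
open Real

/-- Monotonicity of the high-transmit-power SNR gain
`R(C_a, C_t) = x^{1−J}·(C_a + C_t)/(C_a·x^{2(1−J)} + C_t)` of the optimal AIRS deployment
over deployment at the middle IRS: it is strictly increasing in `C_t` and strictly
decreasing in `C_a` on `(0, ∞)`. -/
theorem stmt_13 (J : ℕ) (hJ : 2 ≤ J) (x : ℝ) (hx0 : 0 < x) (hx1 : x < 1) :
    (∀ Ca : ℝ, 0 < Ca → StrictMonoOn
      (fun Ct : ℝ => x ^ (1 - (J : ℝ)) * (Ca + Ct) / (Ca * x ^ (2 * (1 - (J : ℝ))) + Ct))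
      (Set.Ioi 0)) ∧
    (∀ Ct : ℝ, 0 < Ct → StrictAntiOn
      (fun Ca : ℝ => x ^ (1 - (J : ℝ)) * (Ca + Ct) / (Ca * x ^ (2 * (1 - (J : ℝ))) + Ct))
      (Set.Ioi 0)) := by
  have hJ2 : (2 : ℝ) ≤ (J : ℝ) := by exact_mod_cast hJ
  have hk : 0 < x ^ (1 - (J : ℝ)) := rpow_pos_of_pos hx0 _
  have hK : 1 < x ^ (2 * (1 - (J : ℝ))) := by
    rw [one_lt_rpow_iff_of_pos hx0]
    right
    constructor
    · exact hx1
    · nlinarith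
  constructor
  · intro Ca hCa a ha b hb hab
    simp only [Set.mem_Ioi] at ha hb
    have d1 : 0 < Ca * x ^ (2 * (1 - (J : ℝ))) + a := by positivity
    have d2 : 0 < Ca * x ^ (2 * (1 - (J : ℝ))) + b := by positivity
    simp only
    rw [div_lt_div_iff₀ d1 d2]
    nlinarith [mul_pos hCa (sub_pos.mpr hab), mul_pos hk (mul_pos hCa (sub_pos.mpr hab))]
  · intro Ct hCt a ha b hb hab
    simp only [Set.mem_Ioi] at ha hb
    have d1 : 0 < a * x ^ (2 * (1 - (J : ℝ))) + Ct := by positivity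
    have d2 : 0 < b * x ^ (2 * (1 - (J : ℝ))) + Ct := by positivity
    simp only
    rw [div_lt_div_iff₀ d2 d1]
    nlinarith [mul_pos hCt (sub_pos.mpr hab), mul_pos hk (mul_pos hCt (sub_pos.mpr hab))]
end

section
/- Let C_a, C_t, N_a be positive reals, let J ≥ 3 be an odd natural number, and let x > 0. Then the limit as s → 0⁺ of Q_x(J)/Q_x((J+1)/2) equals x^{1−J} (equation (24): in the high transmit power regime the received-power gain of deploying the active IRS last over deploying it at the middle IRS equals x^{1−J}). -/
open Real Filter

/-! As `s → 0` the received power `Q_x(l)` is continuous in `s` with limit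
`C_a·N_a·x^{2(J−l)}`, so the ratio of the received powers at two indices `l`, `m` tends to
`x^{2(m−l)}`; for `l = J` and `m = (J+1)/2` this exponent is `1 − J`. -/

section Limits

variable {Ca Ct Na x : ℝ} (J : ℕ)

theorem Qrec_zero (hCt : Ct ≠ 0) (hx : 0 < x) (l : ℝ) :
    Qrec Ca Ct Na 0 J x l = Ca * Na * x ^ (2 * ((J : ℝ) - l)) := by
  have hsplit : x ^ (2 * ((J : ℝ) - 1)) = x ^ (2 * ((J : ℝ) - l)) * x ^ (2 * (l - 1)) := by
    rw [← rpow_add hx]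
    ring_nf
  have hpow : x ^ (2 * (l - 1)) ≠ 0 := (rpow_pos_of_pos hx _).ne'
  rw [Qrec, zero_mul, zero_mul, add_zero, add_zero, hsplit]
  field_simp

theorem tendsto_Qrec_nhds_zero (hCt : Ct ≠ 0) (hx : 0 < x) (l : ℝ) :
    Tendsto (fun s => Qrec Ca Ct Na s J x l) (nhds 0)
      (nhds (Ca * Na * x ^ (2 * ((J : ℝ) - l)))) := by
  have hden : Ct * x ^ (2 * (l - 1)) + 0 ≠ 0 := by
    rw [add_zero]
    exact mul_ne_zero hCt (rpow_pos_of_pos hx _).ne'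
  have hcont : ContinuousAt (fun s => Qrec Ca Ct Na s J x l) 0 := by
    unfold Qrec
    exact ContinuousAt.div (by fun_prop) (by fun_prop) hden
  simpa only [Qrec_zero J hCt hx] using hcont.tendsto

theorem tendsto_Qrec_div_Qrec_nhds_zero (hCa : Ca ≠ 0) (hCt : Ct ≠ 0) (hNa : Na ≠ 0)
    (hx : 0 < x) (l m : ℝ) :
    Tendsto (fun s => Qrec Ca Ct Na s J x l / Qrec Ca Ct Na s J x m) (nhds 0)
      (nhds (x ^ (2 * (m - l)))) := by
  have hlimit : Ca * Na * x ^ (2 * ((J : ℝ) - l)) / (Ca * Na * x ^ (2 * ((J : ℝ) - m)))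
      = x ^ (2 * (m - l)) := by
    rw [mul_div_mul_left _ _ (mul_ne_zero hCa hNa), ← rpow_sub hx]
    ring_nf
  rw [← hlimit]
  exact (tendsto_Qrec_nhds_zero J hCt hx l).div (tendsto_Qrec_nhds_zero J hCt hx m)
    (mul_ne_zero (mul_ne_zero hCa hNa) (rpow_pos_of_pos hx _).ne')

end Limits

theorem stmt_17_general (Ca Ct Na : ℝ) (hCa : 0 < Ca) (hCt : 0 < Ct) (hNa : 0 < Na)
    (J : ℕ) (x : ℝ) (hx0 : 0 < x) :
    Tendsto (fun s : ℝ =>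
        Qrec Ca Ct Na s J x (J : ℝ) / Qrec Ca Ct Na s J x (((J : ℝ) + 1) / 2))
      (nhdsWithin 0 (Set.Ioi 0)) (nhds (x ^ (1 - (J : ℝ)))) := by
  have hexponent : 2 * (((J : ℝ) + 1) / 2 - J) = 1 - J := by ring
  rw [← hexponent]
  exact (tendsto_Qrec_div_Qrec_nhds_zero J hCa.ne' hCt.ne' hNa.ne' hx0 _ _).mono_left
    nhdsWithin_le_nhds

/-- Equation (24): for odd `J ≥ 3` and `x > 0`, as the noise power `s → 0⁺`, the
received-power gain of deploying the AIRS last over deploying it at the middle IRS,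
`Q_x(J)/Q_x((J+1)/2)`, tends to `x^{1−J}`. -/
theorem stmt_17 (Ca Ct Na : ℝ) (hCa : 0 < Ca) (hCt : 0 < Ct) (hNa : 0 < Na)
    (J : ℕ) (hJ : 3 ≤ J) (hJodd : Odd J) (x : ℝ) (hx0 : 0 < x) :
    Tendsto (fun s : ℝ =>
        Qrec Ca Ct Na s J x (J : ℝ) / Qrec Ca Ct Na s J x (((J : ℝ) + 1) / 2))
      (nhdsWithin 0 (Set.Ioi 0)) (nhds (x ^ (1 - (J : ℝ)))) :=
  stmt_17_general Ca Ct Na hCa hCt hNa J x hx0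
end

section
/- Let P_t, P_a, M, N_a, κ_B, κ_U, κ_I, s be positive reals and J ≥ 1 a natural number, and set C_a = P_a·N_a·κ_U² and C_t = P_t·M·κ_B². Then the function F(N_p) = N_a²·P_t·P_a / ((P_t + N_a·P_a)·N_p²·(C_a + C_t·(N_p·κ_I)^{2(J−1)} + s)) is strictly decreasing on (0, ∞) (the lower bound on the SNR gain of the multi-active/passive-IRS system over the all-passive-IRS system decreases with the number of elements per passive IRS). -/
open Real

/-- The lower bound `F(N_p) = N_a²·P_t·P_a / ((P_t + N_a·P_a)·N_p²·(C_a + C_t·(N_p·κ_I)^{2(J−1)} + s))`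
on the SNR gain of the multi-AIRS/PIRS system over the all-passive-IRS system, with
`C_a = P_a·N_a·κ_U²` and `C_t = P_t·M·κ_B²`, is strictly decreasing in the number of
elements per passive IRS `N_p` on `(0, ∞)`. -/
theorem stmt_18 (Pt Pa M Na κB κU κI s : ℝ)
    (hPt : 0 < Pt) (hPa : 0 < Pa) (hM : 0 < M) (hNa : 0 < Na)
    (hκB : 0 < κB) (hκU : 0 < κU) (hκI : 0 < κI) (hs : 0 < s)
    (J : ℕ) (hJ : 1 ≤ J) :
    StrictAntiOn (fun Np : ℝ =>
        Na ^ 2 * Pt * Pa /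
          ((Pt + Na * Pa) * Np ^ 2 *
            (Pa * Na * κU ^ 2 + Pt * M * κB ^ 2 * (Np * κI) ^ (2 * ((J : ℝ) - 1)) + s)))
      (Set.Ioi 0) := by
  intro x hx y hy hxy
  simp only [Set.mem_Ioi] at hx hy
  have he : (0 : ℝ) ≤ 2 * ((J : ℝ) - 1) := by
    have : (1 : ℝ) ≤ (J : ℝ) := by exact_mod_cast hJ
    nlinarith
  have hK : 0 < Pt + Na * Pa := by positivity
  have hTx : 0 < Pa * Na * κU ^ 2 + Pt * M * κB ^ 2 * (x * κI) ^ (2 * ((J : ℝ) - 1)) + s := by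
    have := Real.rpow_pos_of_pos (mul_pos hx hκI) (2 * ((J : ℝ) - 1))
    positivity
  have hTy : 0 < Pa * Na * κU ^ 2 + Pt * M * κB ^ 2 * (y * κI) ^ (2 * ((J : ℝ) - 1)) + s := by
    have := Real.rpow_pos_of_pos (mul_pos hy hκI) (2 * ((J : ℝ) - 1))
    positivity
  have hTle : Pa * Na * κU ^ 2 + Pt * M * κB ^ 2 * (x * κI) ^ (2 * ((J : ℝ) - 1)) + s
      ≤ Pa * Na * κU ^ 2 + Pt * M * κB ^ 2 * (y * κI) ^ (2 * ((J : ℝ) - 1)) + s := by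
    have hle : (x * κI) ^ (2 * ((J : ℝ) - 1)) ≤ (y * κI) ^ (2 * ((J : ℝ) - 1)) := by
      apply Real.rpow_le_rpow (by positivity) _ he
      exact mul_le_mul_of_nonneg_right hxy.le hκI.le
    have := mul_le_mul_of_nonneg_left hle (by positivity : (0:ℝ) ≤ Pt * M * κB ^ 2)
    linarith
  have hxy2 : x ^ 2 < y ^ 2 := by nlinarith
  have hden : (Pt + Na * Pa) * x ^ 2 *
        (Pa * Na * κU ^ 2 + Pt * M * κB ^ 2 * (x * κI) ^ (2 * ((J : ℝ) - 1)) + s)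
      < (Pt + Na * Pa) * y ^ 2 *
        (Pa * Na * κU ^ 2 + Pt * M * κB ^ 2 * (y * κI) ^ (2 * ((J : ℝ) - 1)) + s) := by
    have h1 : (Pt + Na * Pa) * x ^ 2 < (Pt + Na * Pa) * y ^ 2 :=
      mul_lt_mul_of_pos_left hxy2 hK
    calc (Pt + Na * Pa) * x ^ 2 *
          (Pa * Na * κU ^ 2 + Pt * M * κB ^ 2 * (x * κI) ^ (2 * ((J : ℝ) - 1)) + s)
        ≤ (Pt + Na * Pa) * x ^ 2 *
          (Pa * Na * κU ^ 2 + Pt * M * κB ^ 2 * (y * κI) ^ (2 * ((J : ℝ) - 1)) + s) := by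
          exact mul_le_mul_of_nonneg_left hTle (by positivity)
      _ < _ := mul_lt_mul_of_pos_right h1 hTy
  exact div_lt_div_of_pos_left (by positivity) (by positivity) hden
end
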